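/- Fix t and h_{t+1} ∈ L^0(ℱ_{t+1}), and suppose the unconstrained problem Σ := esssup_{(A,Γ) ∈ L^0(ℱ_t)^N × L^0(ℱ_{t+1})} { U^a_t(Γ) − c_t(A) + U^p_t(h_{t+1} + A·ΔP̃_{t+1} − Γ) } is finite a.s. and attained. Then every maximizer (Â,Γ̂) belongs to C_t(1) — that is, for all A ∈ L^0(ℱ_t)^N one has U^a_t(Γ̂) − c_t(Â) ≥ U^a_t(Γ̂ + (A−Â)·ΔP̃_{t+1}) − c_t(A) a.s. — and consequently Σ equals the constrained value esssup over (β,A,Γ) with β ∈ L^0(ℱ_t) and (A,Γ) ∈ C_t(β) of U^a_t(Γ) − c_t(A) + U^p_t(h_{t+1} + A·ΔP̃_{t+1} − Γ). -/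
import Mathlib


open MeasureTheory Filter
open scoped ENNReal

variable {Ω : Type*} {m0 : MeasurableSpace Ω}

/-- The conditional expectation `E[|X| | F] ∈ [0,∞]`, via monotone truncation. -/
noncomputable def condExpAbs (μ : Measure Ω) (F : MeasurableSpace Ω) (X : Ω → ℝ) :
    Ω → ℝ≥0∞ :=
  fun ω => ⨆ n : ℕ, ENNReal.ofReal ((μ[fun ω' => min |X ω'| (n : ℝ) | F]) ω)

/-- `X ∈ L^1_F(G)`. -/
def MemCondL1 (μ : Measure Ω) (F : MeasurableSpace Ω) (X : Ω → ℝ) : Prop :=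
  ∀ᵐ ω ∂μ, condExpAbs μ F X ω < ⊤

/-- A sequence bounded in `L^1_F(G)`. -/
def BddCondL1 (μ : Measure Ω) (F : MeasurableSpace Ω) (Xs : ℕ → Ω → ℝ) : Prop :=
  ∃ Y : Ω → ℝ, Measurable[F] Y ∧
    ∀ n, ∀ᵐ ω ∂μ, condExpAbs μ F (Xs n) ω ≤ ENNReal.ofReal (Y ω)

/-- Usual conditions on a one-step conditional utility `U : L⁰(𝒢) → L⁰(ℱ) ∪ {−∞}`:
normalized, proper, monotone, `ℱ`-conditionally concave, `ℱ`-translation invariant. -/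
structure UsualOneStep (μ : Measure Ω) (F G : MeasurableSpace Ω)
    (U : (Ω → ℝ) → Ω → EReal) : Prop where
  meas : ∀ X : Ω → ℝ, Measurable[G] X → Measurable[F] (U X)
  normalized : ∀ᵐ ω ∂μ, U (fun _ => 0) ω = 0
  properTop : ∀ X : Ω → ℝ, Measurable[G] X → ∀ᵐ ω ∂μ, U X ω ≠ ⊤
  properBot : ∃ X' : Ω → ℝ, Measurable[G] X' ∧ ∀ᵐ ω ∂μ, U X' ω ≠ ⊥
  mono : ∀ X Y : Ω → ℝ, Measurable[G] X → Measurable[G] Y →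
    (∀ᵐ ω ∂μ, Y ω ≤ X ω) → ∀ᵐ ω ∂μ, U Y ω ≤ U X ω
  concave : ∀ X Y : Ω → ℝ, Measurable[G] X → Measurable[G] Y →
    ∀ lam : Ω → ℝ, Measurable[F] lam → (∀ᵐ ω ∂μ, lam ω ∈ Set.Icc (0 : ℝ) 1) →
    ∀ᵐ ω ∂μ, ((lam ω : ℝ) : EReal) * U X ω + (((1 - lam ω) : ℝ) : EReal) * U Y ω ≤
      U (fun ω' => lam ω' * X ω' + (1 - lam ω') * Y ω') ω
  transInv : ∀ X Y : Ω → ℝ, Measurable[G] X → Measurable[F] Y →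
    ∀ᵐ ω ∂μ, U (fun ω' => X ω' + Y ω') ω = U X ω + ((Y ω : ℝ) : EReal)

/-- `L⁰–L¹` upper semicontinuity of `U`. -/
def USCL0L1 (μ : Measure Ω) (F G : MeasurableSpace Ω) (U : (Ω → ℝ) → Ω → EReal) : Prop :=
  ∀ Xs : ℕ → Ω → ℝ, (∀ n, Measurable[G] (Xs n)) → BddCondL1 μ F Xs →
    ∀ X : Ω → ℝ, Measurable[G] X →
    (∀ᵐ ω ∂μ, Filter.Tendsto (fun n => Xs n ω) Filter.atTop (nhds (X ω))) →
    ∀ᵐ ω ∂μ, Filter.limsup (fun n => U (Xs n) ω) Filter.atTop ≤ U X ω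

/-- `{X₋ : X ∈ dom U} ⊆ L^1_F(G)`. -/
def DomNegPartCondL1 (μ : Measure Ω) (F G : MeasurableSpace Ω)
    (U : (Ω → ℝ) → Ω → EReal) : Prop :=
  ∀ X : Ω → ℝ, Measurable[G] X → (∀ᵐ ω ∂μ, U X ω ≠ ⊥ ∧ U X ω ≠ ⊤) →
    MemCondL1 μ F (fun ω => max (-X ω) 0)

/-- One step of the price process: `P_t` is `ℱ_t`-measurable, `P_{t+1}` is
`ℱ_{t+1}`-measurable, both coordinatewise strictly positive, and `E[P_{t+1} | ℱ_t]` is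
finite a.s. -/
structure PriceStep (μ : Measure Ω) (Ft Ft1 : MeasurableSpace Ω) {N : ℕ}
    (Pt Pt1 : Ω → Fin N → ℝ) : Prop where
  measPt : Measurable[Ft] Pt
  measPt1 : Measurable[Ft1] Pt1
  posPt : ∀ᵐ ω ∂μ, ∀ i, 0 < Pt ω i
  posPt1 : ∀ᵐ ω ∂μ, ∀ i, 0 < Pt1 ω i
  condIntegrable : ∀ i, MemCondL1 μ Ft (fun ω => Pt1 ω i)

/-- The relative price increment `ΔP̃_{t+1} = diag(P_t)⁻¹ (P_{t+1} − P_t)`. -/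
noncomputable def relIncr {N : ℕ} (Pt Pt1 : Ω → Fin N → ℝ) (i : Fin N) (ω : Ω) : ℝ :=
  (Pt1 ω i - Pt ω i) / Pt ω i

/-- Superlinear growth: `c(a)/|a| → +∞` as `|a| → ∞`. -/
def Superlinear {N : ℕ} (c : (Fin N → ℝ) → ℝ) : Prop :=
  ∀ M : ℝ, ∃ R : ℝ, ∀ a : Fin N → ℝ, R ≤ ‖a‖ → M * ‖a‖ ≤ c a


/-- If a sum of two `EReal`s is finite, both summands are finite. -/
lemma ereal_add_finite {a b : EReal} (hbot : a + b ≠ ⊥) (htop : a + b ≠ ⊤) :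
    a ≠ ⊥ ∧ a ≠ ⊤ ∧ b ≠ ⊥ ∧ b ≠ ⊤ := by
  have ha : a ≠ ⊥ := fun h => hbot (by simp [h, EReal.bot_add])
  have hb : b ≠ ⊥ := fun h => hbot (by simp [h, EReal.add_bot])
  refine ⟨ha, fun h => htop ?_, hb, fun h => htop ?_⟩
  · rw [h]; exact EReal.top_add_of_ne_bot hb
  · rw [h]; rw [add_comm]; exact EReal.top_add_of_ne_bot ha

/-- Cancellation of a finite summand on the right in `EReal`. -/
lemma ereal_le_of_add_le_add_right {x y u : EReal} (hbot : u ≠ ⊥) (htop : u ≠ ⊤)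
    (h : x + u ≤ y + u) : x ≤ y := by
  have hu : ((u.toReal : ℝ) : EReal) = u := EReal.coe_toReal htop hbot
  rw [← hu] at h
  exact (EReal.addLECancellable_coe u.toReal).add_le_add_iff_right.1 h

section Statement1

variable (μ : Measure Ω) {N : ℕ} (Ft Ft1 : MeasurableSpace Ω)
  (Pt Pt1 : Ω → Fin N → ℝ) (Ua : (Ω → ℝ) → Ω → EReal) (c : (Fin N → ℝ) → ℝ)

/-- The incentive-compatibility set `C_t(β)`: the pair `(A,Γ)` is such that the effort `A`
is optimal for the Agent against all alternatives `Ā ∈ L⁰(ℱ_t)^N`. -/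
def MemIC (β : Ω → ℝ) (A : Ω → Fin N → ℝ) (Γ : Ω → ℝ) : Prop :=
  Measurable[Ft] A ∧ Measurable[Ft1] Γ ∧
    ∀ Abar : Ω → Fin N → ℝ, Measurable[Ft] Abar →
      ∀ᵐ ω ∂μ,
        Ua (fun ω' => Γ ω' + β ω' * ∑ i, (Abar ω' i - A ω' i) * relIncr Pt Pt1 i ω') ω +
            ((-(c (Abar ω)) : ℝ) : EReal) ≤
          Ua Γ ω + ((-(c (A ω)) : ℝ) : EReal)

/-- (Proposition 2.6 of the paper.)  If the unconstrained problem
`Σ = esssup_{(A,Γ)} { Uᵃ(Γ) − c(A) + Uᵖ(h_{t+1} + A·ΔP̃_{t+1} − Γ) }` is a.s. finite and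
attained, then every maximizer `(Â,Γ̂)` lies in the incentive-compatibility set `C_t(1)`,
and consequently `Σ` equals the constrained essential supremum over all `(β,A,Γ)` with
`(A,Γ) ∈ C_t(β)`. -/
theorem unconstrained_maximizer_is_incentive_compatible
    {m0 : MeasurableSpace Ω} [IsProbabilityMeasure μ]
    (hFt : Ft ≤ Ft1) (hFt1 : Ft1 ≤ m0)
    (hP : PriceStep μ Ft Ft1 Pt Pt1)
    (Up : (Ω → ℝ) → Ω → EReal)
    (hUaTop : ∀ X : Ω → ℝ, Measurable[Ft1] X → ∀ᵐ ω ∂μ, Ua X ω ≠ ⊤)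
    (hUaBot : ∃ X : Ω → ℝ, Measurable[Ft1] X ∧ ∀ᵐ ω ∂μ, Ua X ω ≠ ⊥)
    (hUpTop : ∀ X : Ω → ℝ, Measurable[Ft1] X → ∀ᵐ ω ∂μ, Up X ω ≠ ⊤)
    (hUpBot : ∃ X : Ω → ℝ, Measurable[Ft1] X ∧ ∀ᵐ ω ∂μ, Up X ω ≠ ⊥)
    (hc : StrictConvexOn ℝ Set.univ c)
    (h : Ω → ℝ) (hh : Measurable[Ft1] h)
    -- the unconstrained problem is finite and attainable
    (hatt : ∃ Ahat : Ω → Fin N → ℝ, ∃ Ghat : Ω → ℝ,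
      Measurable[Ft] Ahat ∧ Measurable[Ft1] Ghat ∧
      (∀ A : Ω → Fin N → ℝ, ∀ Γ : Ω → ℝ, Measurable[Ft] A → Measurable[Ft1] Γ →
        ∀ᵐ ω ∂μ,
          Ua Γ ω + ((-(c (A ω)) : ℝ) : EReal) +
              Up (fun ω' => h ω' + (∑ i, A ω' i * relIncr Pt Pt1 i ω') - Γ ω') ω ≤
            Ua Ghat ω + ((-(c (Ahat ω)) : ℝ) : EReal) +
              Up (fun ω' => h ω' + (∑ i, Ahat ω' i * relIncr Pt Pt1 i ω') - Ghat ω') ω) ∧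
      (∀ᵐ ω ∂μ,
        Ua Ghat ω + ((-(c (Ahat ω)) : ℝ) : EReal) +
            Up (fun ω' => h ω' + (∑ i, Ahat ω' i * relIncr Pt Pt1 i ω') - Ghat ω') ω ≠ ⊥ ∧
        Ua Ghat ω + ((-(c (Ahat ω)) : ℝ) : EReal) +
            Up (fun ω' => h ω' + (∑ i, Ahat ω' i * relIncr Pt Pt1 i ω') - Ghat ω') ω ≠ ⊤)) :
    -- every maximizer `(Â,Γ̂)` belongs to `C_t(1)` …
    ∀ Ahat : Ω → Fin N → ℝ, ∀ Ghat : Ω → ℝ,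
      Measurable[Ft] Ahat → Measurable[Ft1] Ghat →
      (∀ A : Ω → Fin N → ℝ, ∀ Γ : Ω → ℝ, Measurable[Ft] A → Measurable[Ft1] Γ →
        ∀ᵐ ω ∂μ,
          Ua Γ ω + ((-(c (A ω)) : ℝ) : EReal) +
              Up (fun ω' => h ω' + (∑ i, A ω' i * relIncr Pt Pt1 i ω') - Γ ω') ω ≤
            Ua Ghat ω + ((-(c (Ahat ω)) : ℝ) : EReal) +
              Up (fun ω' => h ω' + (∑ i, Ahat ω' i * relIncr Pt Pt1 i ω') - Ghat ω') ω) →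
      MemIC μ Ft Ft1 Pt Pt1 Ua c (fun _ => (1 : ℝ)) Ahat Ghat ∧
      -- … and consequently `Σ` equals the constrained value: the value at `(Â,Γ̂)`
      -- dominates the value of every incentive-compatible triple `(β,A,Γ)`
      (∀ β : Ω → ℝ, Measurable[Ft] β → ∀ A : Ω → Fin N → ℝ, ∀ Γ : Ω → ℝ,
        MemIC μ Ft Ft1 Pt Pt1 Ua c β A Γ →
        ∀ᵐ ω ∂μ,
          Ua Γ ω + ((-(c (A ω)) : ℝ) : EReal) +
              Up (fun ω' => h ω' + (∑ i, A ω' i * relIncr Pt Pt1 i ω') - Γ ω') ω ≤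
            Ua Ghat ω + ((-(c (Ahat ω)) : ℝ) : EReal) +
              Up (fun ω' => h ω' + (∑ i, Ahat ω' i * relIncr Pt Pt1 i ω') - Ghat ω') ω) := by
  intro Ahat Ghat hAm hGm hmax
  obtain ⟨A', G', hA'm, hG'm, hmax', hfin'⟩ := hatt
  -- the value at our maximizer is finite a.e.
  have hVfin : ∀ᵐ ω ∂μ,
      Ua Ghat ω + ((-(c (Ahat ω)) : ℝ) : EReal) +
          Up (fun ω' => h ω' + (∑ i, Ahat ω' i * relIncr Pt Pt1 i ω') - Ghat ω') ω ≠ ⊥ ∧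
      Ua Ghat ω + ((-(c (Ahat ω)) : ℝ) : EReal) +
          Up (fun ω' => h ω' + (∑ i, Ahat ω' i * relIncr Pt Pt1 i ω') - Ghat ω') ω ≠ ⊤ := by
    filter_upwards [hmax A' G' hA'm hG'm, hmax' Ahat Ghat hAm hGm, hfin'] with ω h1 h2 h3
    constructor
    · intro hb; rw [hb] at h1; exact h3.1 (le_antisymm h1 bot_le)
    · intro ht; rw [ht] at h2; exact h3.2 (le_antisymm le_top h2)
  constructor
  · -- incentive compatibility
    refine ⟨hAm, hGm, ?_⟩
    intro Abar hAbarm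
    -- measurability of relIncr and of the perturbed payment
    have hrel : ∀ i, Measurable[Ft1] (fun ω => relIncr Pt Pt1 i ω) := fun i => by
      have h1 : Measurable[Ft1] (fun ω => Pt1 ω i) :=
        (measurable_pi_apply i).comp hP.measPt1
      have h2 : Measurable[Ft1] (fun ω => Pt ω i) :=
        ((measurable_pi_apply i).comp hP.measPt).mono hFt le_rfl
      exact (h1.sub h2).div h2
    set Γnew : Ω → ℝ := fun ω' =>
      Ghat ω' + (fun _ : Ω => (1 : ℝ)) ω' *
        ∑ i, (Abar ω' i - Ahat ω' i) * relIncr Pt Pt1 i ω' with hΓnew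
    have hΓnewm : Measurable[Ft1] Γnew := by
      refine hGm.add (Measurable.const_mul ?_ 1)
      refine Finset.measurable_sum _ (fun i _ => ?_)
      exact ((((measurable_pi_apply i).comp hAbarm).sub
        ((measurable_pi_apply i).comp hAm)).mono hFt le_rfl).mul (hrel i)
    -- the principal's argument is unchanged
    have hfeq : (fun ω' => h ω' + (∑ i, Abar ω' i * relIncr Pt Pt1 i ω') - Γnew ω')
        = (fun ω' => h ω' + (∑ i, Ahat ω' i * relIncr Pt Pt1 i ω') - Ghat ω') := by
      funext ω'
      simp only [hΓnew, sub_mul, Finset.sum_sub_distrib]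
      ring
    have hUpeq : Up (fun ω' => h ω' + (∑ i, Abar ω' i * relIncr Pt Pt1 i ω') - Γnew ω')
        = Up (fun ω' => h ω' + (∑ i, Ahat ω' i * relIncr Pt Pt1 i ω') - Ghat ω') :=
      congrArg Up hfeq
    filter_upwards [hmax Abar Γnew hAbarm hΓnewm, hVfin] with ω hle hfin
    rw [hUpeq] at hle
    obtain ⟨-, -, hub, hut⟩ := ereal_add_finite hfin.1 hfin.2
    exact ereal_le_of_add_le_add_right hub hut hle
  · -- constrained value is dominated
    intro β hβ A Γ hIC
    exact hmax A Γ hIC.1 hIC.2.1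

end Statement1
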